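/- arXiv:1910.13311 — 2 statements merged into one kernel-verified Lean document; each statement's English description precedes it below -/
import Mathlib

section
/- Let Ω be an open bounded subset of ℝ^N with Lipschitz boundary, let p > 1, λ ≥ 1, and γ ≥ 0. Then there exists no function u ∈ W^{1,p}_0(Ω) ∩ L^∞(Ω) with u^{−γ} ∈ L¹_loc(Ω) satisfying ∫_Ω |∇u|^{p−2}∇u·∇φ = λ∫_Ω (|∇u|^p/u) φ + ∫_Ω φ/u^γ for every φ ∈ W^{1,p}_0(Ω) ∩ L^∞(Ω); i.e., the problem −Δ_p u = λ|∇u|^p/u + u^{−γ}, u = 0 on ∂Ω, has no weak solution when λ ≥ 1. -/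
open MeasureTheory Filter Topology Set Metric
open scoped ENNReal NNReal Topology

noncomputable section

/-- Euclidean space `ℝ^N`. -/
abbrev Euc (N : ℕ) : Type := EuclideanSpace ℝ (Fin N)

variable {N : ℕ}

/-- `C¹` test functions compactly supported in `Ω`. -/
def IsTestOn (Ω : Set (Euc N)) (φ : Euc N → ℝ) : Prop :=
  ContDiff ℝ 1 φ ∧ HasCompactSupport φ ∧ tsupport φ ⊆ Ω

/-- `i`-th partial derivative. -/
def pd (φ : Euc N → ℝ) (i : Fin N) (x : Euc N) : ℝ :=
  fderiv ℝ φ x (EuclideanSpace.single i 1)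

/-- `Ω` has Lipschitz boundary: near each boundary point, `Ω` coincides with the open
subgraph of a Lipschitz function in suitable orthonormal coordinates. -/
def HasLipschitzBoundary (Ω : Set (Euc N)) : Prop :=
  ∀ x ∈ frontier Ω, ∃ v : Euc N, ‖v‖ = 1 ∧
    ∃ (K : ℝ≥0) (g : (Submodule.span ℝ {v})ᗮ → ℝ), LipschitzWith K g ∧
      ∃ r : ℝ, 0 < r ∧ ∀ y ∈ Metric.ball x r,
        (y ∈ Ω ↔ (inner ℝ y v : ℝ) < g (Submodule.orthogonalProjectionOnto (Submodule.span ℝ {v})ᗮ y))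

/-- Polar representation of the distributional gradient: `Du = σ·ν` on `Ω`, where
`ν = |Du|` is a positive measure and `σ` a `ν`-a.e. unit vector field. -/
structure IsGradMeas (Ω : Set (Euc N)) (u : Euc N → ℝ) (σ : Euc N → Euc N)
    (ν : Measure (Euc N)) : Prop where
  unit : ∀ᵐ x ∂ν, ‖σ x‖ = 1
  outside : ν Ωᶜ = 0
  ibp : ∀ φ : Euc N → ℝ, IsTestOn Ω φ → ∀ i : Fin N,
    ∫ x in Ω, u x * pd φ i x = - ∫ x, φ x * σ x i ∂ν

/-- A measure is finite on compact subsets of `Ω` (local finiteness in `Ω`). -/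
def FiniteOnCompactsIn (Ω : Set (Euc N)) (ν : Measure (Euc N)) : Prop :=
  ∀ K : Set (Euc N), IsCompact K → K ⊆ Ω → ν K < ⊤

/-- The precise representative: limit of ball averages. -/
def pRep (u : Euc N → ℝ) (x : Euc N) : ℝ :=
  limUnder (nhdsWithin (0:ℝ) (Ioi 0)) (fun r => ⨍ y in Metric.ball x r, u y)

/-- `u` has an approximate limit at `x` (in the ball-average sense). -/
def ApproxCont (u : Euc N → ℝ) (x : Euc N) : Prop :=
  ∃ a : ℝ, Tendsto (fun r => ⨍ y in Metric.ball x r, |u y - a|)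
    (nhdsWithin (0:ℝ) (Ioi 0)) (𝓝 0)

/-- The jump part of `Du = σ ν` vanishes: `|Du|` does not charge the set of approximate
discontinuity points of `u`. -/
def NoJump (u : Euc N → ℝ) (ν : Measure (Euc N)) : Prop :=
  ν {x | ¬ ApproxCont u x} = 0

/-- The best constant in the Sobolev inequality
`‖v‖_{L^{N/(N-1)}} ≤ S₁ ‖∇v‖_{L¹}` on `W^{1,1}_0`. -/
def sobS1 (N : ℕ) : ℝ :=
  sInf {C : ℝ | 0 ≤ C ∧ ∀ φ : Euc N → ℝ, ContDiff ℝ 1 φ → HasCompactSupport φ →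
    (∫ x, |φ x| ^ ((N : ℝ) / ((N : ℝ) - 1))) ^ (((N : ℝ) - 1) / (N : ℝ)) ≤
      C * ∫ x, ‖gradient φ x‖}

/-- The `L^N(Ω)` norm. -/
def lNnorm (N : ℕ) (Ω : Set (Euc N)) (f : Euc N → ℝ) : ℝ :=
  (∫ x in Ω, |f x| ^ (N : ℝ)) ^ ((N : ℝ)⁻¹)

/-- Assumption (g1): `g : [0,∞) → (0,∞]` continuous, finite outside the origin, with
`g(s) ≤ c₁ s^{-θ}` for `0 < s ≤ s₁`. -/
structure G1 (g : ℝ → ℝ≥0∞) (c₁ θ s₁ : ℝ) : Prop where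
  cont : ContinuousOn g (Ici 0)
  pos : ∀ s ∈ Ici (0:ℝ), 0 < g s
  finite : ∀ s : ℝ, 0 < s → g s ≠ ⊤
  c1pos : 0 < c₁
  s1pos : 0 < s₁
  bound : ∀ s : ℝ, 0 < s → s ≤ s₁ → g s ≤ ENNReal.ofReal (c₁ / s ^ θ)

/-- Assumption (h1): `h : [0,∞) → [0,∞]` continuous, finite outside the origin, with
`h(s) ≤ c₂ s^{-γ}` for `0 < s ≤ s₂`, and `h(s) → h∞ < ∞` as `s → ∞`. -/
structure H1 (h : ℝ → ℝ≥0∞) (c₂ γ s₂ : ℝ) (hinf : ℝ≥0∞) : Prop where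
  cont : ContinuousOn h (Ici 0)
  finite : ∀ s : ℝ, 0 < s → h s ≠ ⊤
  c2pos : 0 < c₂
  s2pos : 0 < s₂
  bound : ∀ s : ℝ, 0 < s → s ≤ s₂ → h s ≤ ENNReal.ofReal (c₂ / s ^ γ)
  lim : Tendsto h atTop (𝓝 hinf)
  fin : hinf ≠ ⊤

/-- `tu` is the boundary trace of `u` on `∂Ω` (in the sense of averages from inside). -/
def IsBdryTrace (Ω : Set (Euc N)) (u tu : Euc N → ℝ) : Prop :=
  ∀ᵐ x ∂((μH[(N:ℝ) - 1]).restrict (frontier Ω)),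
    Tendsto (fun r => ⨍ y in Metric.ball x r ∩ Ω, |u y - tu x|)
      (nhdsWithin (0:ℝ) (Ioi 0)) (𝓝 0)


/-- `(u, gu) ∈ W^{1,p}_0(Ω)`: `u` extended by zero outside `Ω`, with weak gradient
`gu`, both in `L^p(ℝ^N)` (characterization of the zero trace on a Lipschitz domain). -/
structure MemW1p0 (Ω : Set (Euc N)) (p : ℝ) (u : Euc N → ℝ) (gu : Euc N → Euc N) :
    Prop where
  zero : ∀ x ∉ Ω, u x = 0
  gzero : ∀ x ∉ Ω, gu x = 0
  memu : MemLp u (ENNReal.ofReal p) volume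
  memgu : MemLp gu (ENNReal.ofReal p) volume
  ibp : ∀ φ : Euc N → ℝ, ContDiff ℝ 1 φ → HasCompactSupport φ → ∀ i : Fin N,
    ∫ x, u x * pd φ i x = - ∫ x, φ x * gu x i

/-
Testing the equation with `φ = u` gives `∫ |∇u|^p = λ ∫ |∇u|^p + ∫ u^{1-γ}`, so for `λ ≥ 1` the
nonnegative integral `∫ u^{1-γ}` vanishes, which is absurd when `u^{1-γ}` is integrable. Otherwise
(the Bochner integral then being `0`), test also with a bump `χ` supported in `Ω` and with `u + χ`:
the gradient terms are additive in `φ`, while `∫ (u + χ) u^{-γ} = 0` and `∫ χ u^{-γ} > 0`.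
-/

open Function

section

variable {F : Type*} [NormedAddCommGroup F] [InnerProductSpace ℝ F] [CompleteSpace F]

theorem gradient_of_notMem_tsupport {f : F → ℝ} {x : F} (hx : x ∉ tsupport f) :
    gradient f x = 0 := by
  simp [gradient, fderiv_of_notMem_tsupport ℝ hx]

theorem ContDiff.continuous_gradient {f : F → ℝ} (hf : ContDiff ℝ 1 f) :
    Continuous (gradient f) :=
  (InnerProductSpace.toDual ℝ F).symm.continuous.comp (hf.continuous_fderiv one_ne_zero)

theorem HasCompactSupport.gradient {f : F → ℝ} (hf : HasCompactSupport f) :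
    HasCompactSupport (gradient f) :=
  (hf.fderiv (𝕜 := ℝ)).comp_left (g := (InnerProductSpace.toDual ℝ F).symm) (map_zero _)

end

theorem gradient_apply_eq_pd (f : Euc N → ℝ) (x : Euc N) (i : Fin N) :
    gradient f x i = pd f i x := by
  have h := inner_gradient_left (f := f) (x := x) (y := EuclideanSpace.single i (1 : ℝ))
  rw [EuclideanSpace.inner_single_right] at h
  simpa [pd] using h

theorem integral_mul_pd_eq_neg {f g : Euc N → ℝ} (hf : ContDiff ℝ 1 f) (hfs : HasCompactSupport f)
    (hg : ContDiff ℝ 1 g) (i : Fin N) :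
    ∫ x, f x * pd g i x = - ∫ x, g x * pd f i x := by
  have hpd : ∀ {h : Euc N → ℝ}, ContDiff ℝ 1 h → Continuous (pd h i) := fun hh =>
    (hh.continuous_fderiv one_ne_zero).clm_apply continuous_const
  simp only [pd, mul_comm (g _)]
  exact integral_mul_fderiv_eq_neg_fderiv_mul_of_integrable
    ((hpd hf).mul hg.continuous |>.integrable_of_hasCompactSupport
      (hfs.fderiv_apply (𝕜 := ℝ) _).mul_right)
    (hf.continuous.mul (hpd hg) |>.integrable_of_hasCompactSupport hfs.mul_right)
    (hf.continuous.mul hg.continuous |>.integrable_of_hasCompactSupport hfs.mul_right)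
    (fun x _ => hf.differentiable one_ne_zero x) (fun x _ => hg.differentiable one_ne_zero x)

theorem memW1p0_of_contDiff {Ω : Set (Euc N)} (p : ℝ) {f : Euc N → ℝ} (hf : ContDiff ℝ 1 f)
    (hfs : HasCompactSupport f) (hfΩ : tsupport f ⊆ Ω) : MemW1p0 Ω p f (gradient f) where
  zero _ hx := image_eq_zero_of_notMem_tsupport fun h => hx (hfΩ h)
  gzero _ hx := gradient_of_notMem_tsupport fun h => hx (hfΩ h)
  memu := hf.continuous.memLp_of_hasCompactSupport hfs
  memgu := hf.continuous_gradient.memLp_of_hasCompactSupport hfs.gradient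
  ibp φ hφ _ i := by
    simp only [gradient_apply_eq_pd]
    exact integral_mul_pd_eq_neg hf hfs hφ i

theorem MemW1p0.add {Ω : Set (Euc N)} {p : ℝ} (hp : 1 ≤ p) {u v : Euc N → ℝ}
    {gu gv : Euc N → Euc N} (hu : MemW1p0 Ω p u gu) (hv : MemW1p0 Ω p v gv) :
    MemW1p0 Ω p (u + v) (gu + gv) where
  zero x hx := by simp [hu.zero x hx, hv.zero x hx]
  gzero x hx := by simp [hu.gzero x hx, hv.gzero x hx]
  memu := hu.memu.add hv.memu
  memgu := hu.memgu.add hv.memgu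
  ibp φ hφ hφs i := by
    have hp' : 1 ≤ ENNReal.ofReal p := ENNReal.one_le_ofReal.2 hp
    have hpd : Continuous (pd φ i) := (hφ.continuous_fderiv one_ne_zero).clm_apply continuous_const
    have hmul : ∀ {w : Euc N → ℝ}, MemLp w (ENNReal.ofReal p) →
        Integrable (fun x => w x * pd φ i x) := fun hw =>
      (hw.locallyIntegrable hp').integrable_smul_right_of_hasCompactSupport hpd
        (hφs.fderiv_apply (𝕜 := ℝ) _)
    have hcoord : ∀ {gw : Euc N → Euc N}, MemLp gw (ENNReal.ofReal p) →
        Integrable (fun x => φ x * gw x i) := fun hgw => by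
      simpa using (EuclideanSpace.proj i : Euc N →L[ℝ] ℝ).integrable_comp
        ((hgw.locallyIntegrable hp').integrable_smul_left_of_hasCompactSupport hφ.continuous hφs)
    simp only [Pi.add_apply, WithLp.ofLp_add, add_mul, mul_add]
    rw [integral_add (hmul hu.memu) (hmul hv.memu),
      integral_add (hcoord hu.memgu) (hcoord hv.memgu), hu.ibp φ hφ hφs i, hv.ibp φ hφ hφs i,
      neg_add]

theorem MeasureTheory.MemLp.integrable_norm_rpow_of_ofReal {X E : Type*} [MeasurableSpace X]
    [NormedAddCommGroup E] {μ : Measure X} {p : ℝ} (hp : 0 < p) {f : X → E}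
    (hf : MemLp f (ENNReal.ofReal p) μ) : Integrable (fun x => ‖f x‖ ^ p) μ := by
  simpa [ENNReal.toReal_ofReal hp.le] using
    hf.integrable_norm_rpow (by simpa using hp) ENNReal.ofReal_ne_top

theorem rpow_sub_one_mul_le_rpow_add_rpow {p t s : ℝ} (hp : 1 ≤ p) (ht : 0 ≤ t) (hs : 0 ≤ s) :
    t ^ (p - 1) * s ≤ t ^ p + s ^ p := by
  have hsplit : ∀ {r : ℝ}, 0 ≤ r → r ^ (p - 1) * r = r ^ p := fun hr => by
    rw [← Real.rpow_add_one' hr (by linarith), sub_add_cancel]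
  rcases le_total s t with h | h
  · calc t ^ (p - 1) * s ≤ t ^ (p - 1) * t := by gcongr
      _ ≤ t ^ p + s ^ p := by rw [hsplit ht]; linarith [Real.rpow_nonneg hs p]
  · calc t ^ (p - 1) * s ≤ s ^ (p - 1) * s := by gcongr
      _ ≤ t ^ p + s ^ p := by rw [hsplit hs]; linarith [Real.rpow_nonneg ht p]

section

variable {E : Type*} [NormedAddCommGroup E] [InnerProductSpace ℝ E] {p : ℝ}

theorem norm_rpow_sub_two_mul_inner_self (hp : p ≠ 0) (a : E) :
    ‖a‖ ^ (p - 2) * inner ℝ a a = ‖a‖ ^ p := by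
  rcases eq_or_ne a 0 with rfl | ha
  · simp [Real.zero_rpow hp]
  · rw [real_inner_self_eq_norm_sq, ← Real.rpow_natCast, ← Real.rpow_add (norm_pos_iff.2 ha)]
    norm_num

theorem abs_norm_rpow_sub_two_mul_inner_le (hp : 1 ≤ p) (a b : E) :
    |‖a‖ ^ (p - 2) * inner ℝ a b| ≤ ‖a‖ ^ p + ‖b‖ ^ p := by
  rcases eq_or_ne a 0 with rfl | ha
  · simp only [inner_zero_left, mul_zero, abs_zero]
    positivity
  calc |‖a‖ ^ (p - 2) * inner ℝ a b| ≤ ‖a‖ ^ (p - 2) * (‖a‖ * ‖b‖) := by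
        rw [abs_mul, abs_of_nonneg (by positivity)]
        exact mul_le_mul_of_nonneg_left (abs_real_inner_le_norm a b) (by positivity)
    _ = ‖a‖ ^ (p - 1) * ‖b‖ := by
        rw [← mul_assoc, ← Real.rpow_add_one (norm_ne_zero_iff.2 ha)]
        ring_nf
    _ ≤ ‖a‖ ^ p + ‖b‖ ^ p := rpow_sub_one_mul_le_rpow_add_rpow hp (norm_nonneg a) (norm_nonneg b)

theorem MeasureTheory.MemLp.integrable_norm_rpow_sub_two_mul_inner {X : Type*}
    [MeasurableSpace X] {μ : Measure X} [MeasurableSpace E] [BorelSpace E]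
    [SecondCountableTopology E] (hp : 1 ≤ p) {f g : X → E}
    (hf : MemLp f (ENNReal.ofReal p) μ) (hg : MemLp g (ENNReal.ofReal p) μ) :
    Integrable (fun x => ‖f x‖ ^ (p - 2) * inner ℝ (f x) (g x)) μ := by
  have hnorm : AEMeasurable (fun x => ‖f x‖ ^ (p - 2)) μ :=
    hf.aestronglyMeasurable.norm.aemeasurable.pow_const _
  refine ((hf.integrable_norm_rpow_of_ofReal (by linarith)).add
    (hg.integrable_norm_rpow_of_ofReal (by linarith))).mono'
    (hnorm.aestronglyMeasurable.mul
      (hf.aestronglyMeasurable.inner (𝕜 := ℝ) hg.aestronglyMeasurable))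
    (Eventually.of_forall fun x => ?_)
  exact abs_norm_rpow_sub_two_mul_inner_le hp (f x) (g x)

end

section

variable {X : Type*} [MeasurableSpace X] {μ : Measure X}

theorem setIntegral_pos_of_ae_pos {f : X → ℝ} {s : Set X} (hs : μ s ≠ 0)
    (hf : ∀ᵐ x ∂μ.restrict s, 0 < f x) (hfi : IntegrableOn f s μ) :
    0 < ∫ x in s, f x ∂μ := by
  rw [integral_pos_iff_support_of_nonneg_ae (hf.mono fun _ h => h.le) hfi, pos_iff_ne_zero]
  intro h0
  have hfalse : ∀ᵐ _ ∂μ.restrict s, False := by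
    filter_upwards [measure_eq_zero_iff_ae_notMem.1 h0, hf] with x hx hfx using hx hfx.ne'
  exact hs (Measure.restrict_eq_zero.1 (ae_eq_bot.1 (eventually_false_iff_eq_bot.1 hfalse)))

variable [TopologicalSpace X] [OpensMeasurableSpace X]

theorem setIntegral_mul_pos_of_support_subset [μ.IsOpenPosMeasure] {χ f : X → ℝ} {s : Set X}
    (hχ : Continuous χ) (hχ0 : ∀ x, 0 ≤ χ x) (hχne : (support χ).Nonempty) (hχs : support χ ⊆ s)
    (hf : ∀ᵐ x ∂μ.restrict s, 0 < f x) (hχf : IntegrableOn (fun x => χ x * f x) s μ) :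
    0 < ∫ x in s, χ x * f x ∂μ := by
  have hvanish : ∀ t, support χ ⊆ t → ∀ x ∉ t, χ x * f x = 0 := fun t ht x hx => by
    rw [notMem_support.1 fun h => hx (ht h), zero_mul]
  rw [setIntegral_eq_integral_of_forall_compl_eq_zero (hvanish s hχs),
    ← setIntegral_eq_integral_of_forall_compl_eq_zero (hvanish _ subset_rfl)]
  refine setIntegral_pos_of_ae_pos (hχ.isOpen_support.measure_ne_zero μ hχne) ?_
    (hχf.mono_set hχs)
  filter_upwards [ae_restrict_of_ae_restrict_of_subset hχs hf,
    ae_restrict_mem hχ.isOpen_support.measurableSet] with x hfx hx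
  exact mul_pos ((hχ0 x).lt_of_ne' hx) hfx

theorem MeasureTheory.IntegrableOn.integrable_mul_of_hasCompactSupport [T2Space X] {χ f : X → ℝ}
    (hf : IntegrableOn f (tsupport χ) μ) (hχ : Continuous χ) (hχs : HasCompactSupport χ) :
    Integrable (fun x => χ x * f x) μ :=
  (integrableOn_iff_integrable_of_support_subset
    ((support_mul_subset_left χ f).trans (subset_tsupport χ))).1
    ((Integrable.locallyIntegrable hf).integrable_smul_left_of_hasCompactSupport hχ hχs)

end

theorem exists_contDiff_integral_mul_pos {E : Type*} [NormedAddCommGroup E] [NormedSpace ℝ E]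
    [FiniteDimensional ℝ E] [MeasurableSpace E] [BorelSpace E] {μ : Measure E}
    [μ.IsOpenPosMeasure] {s : Set E} (hs : IsOpen s) (hne : s.Nonempty) {w : E → ℝ}
    (hw : ∀ᵐ x ∂μ.restrict s, 0 < w x)
    (hloc : ∀ K, IsCompact K → K ⊆ s → IntegrableOn w K μ) :
    ∃ χ : E → ℝ, ContDiff ℝ 1 χ ∧ HasCompactSupport χ ∧ tsupport χ ⊆ s ∧ (∀ x, |χ x| ≤ 1) ∧
      IntegrableOn (fun x => χ x * w x) s μ ∧ 0 < ∫ x in s, χ x * w x ∂μ := by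
  obtain ⟨x₀, hx₀⟩ := hne
  obtain ⟨χ, hχs, hχc, hχ, hχI, hχx₀⟩ :=
    exists_contDiff_tsupport_subset (n := 1) (hs.mem_nhds hx₀)
  have hχ0 : ∀ x, 0 ≤ χ x := fun x => (hχI (mem_range_self x)).1
  have hχw : IntegrableOn (fun x => χ x * w x) s μ :=
    ((hloc _ hχc hχs).integrable_mul_of_hasCompactSupport hχ.continuous hχc).integrableOn
  refine ⟨χ, hχ, hχc, hχs, fun x => abs_le.2 ⟨by linarith [hχ0 x], (hχI (mem_range_self x)).2⟩,
    hχw, ?_⟩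
  exact setIntegral_mul_pos_of_support_subset hχ.continuous hχ0 ⟨x₀, by simp [hχx₀]⟩
    ((subset_tsupport χ).trans hχs) hw hχw

theorem not_integrableOn_mul_rpow_neg_of_self_test {X E : Type*} [MeasurableSpace X]
    [NormedAddCommGroup E] [InnerProductSpace ℝ E] {μ : Measure X} {s : Set X} (hs : μ s ≠ 0)
    {p lam γ : ℝ} (hp : p ≠ 0) (hlam : 1 ≤ lam) {u : X → ℝ} {gu : X → E}
    (hpos : ∀ᵐ x ∂μ.restrict s, 0 < u x)
    (hself : ∫ x in s, ‖gu x‖ ^ (p - 2) * inner ℝ (gu x) (gu x) ∂μ =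
      lam * (∫ x in s, (‖gu x‖ ^ p / u x) * u x ∂μ) + ∫ x in s, u x * u x ^ (-γ) ∂μ) :
    ¬ IntegrableOn (fun x => u x * u x ^ (-γ)) s μ := by
  intro hint
  have hB : 0 < ∫ x in s, u x * u x ^ (-γ) ∂μ :=
    setIntegral_pos_of_ae_pos hs (hpos.mono fun x hx => by positivity) hint
  have hG : 0 ≤ ∫ x in s, ‖gu x‖ ^ p ∂μ := integral_nonneg fun x => by positivity
  simp only [norm_rpow_sub_two_mul_inner_self hp] at hself
  rw [integral_congr_ae (hpos.mono fun x hx => div_mul_cancel₀ _ hx.ne')] at hself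
  nlinarith

theorem nonexistence_p_laplacian_general (N : ℕ) (Ω : Set (Euc N))
    (hΩo : IsOpen Ω) (hΩne : Ω.Nonempty)
    (p lam γ : ℝ) (hp : 1 < p) (hlam : 1 ≤ lam) :
    ¬ ∃ (u : Euc N → ℝ) (gu : Euc N → Euc N),
        MemW1p0 Ω p u gu ∧
        (∃ M : ℝ, ∀ᵐ x ∂(volume : Measure (Euc N)), |u x| ≤ M) ∧
        (∀ᵐ x ∂(volume.restrict Ω), 0 < u x) ∧
        (∀ K : Set (Euc N), IsCompact K → K ⊆ Ω →
          IntegrableOn (fun x => (u x) ^ (-γ)) K) ∧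
        IntegrableOn (fun x => ‖gu x‖ ^ p / u x) Ω ∧
        (∀ (φ : Euc N → ℝ) (gφ : Euc N → Euc N), MemW1p0 Ω p φ gφ →
          (∃ M : ℝ, ∀ᵐ x ∂(volume : Measure (Euc N)), |φ x| ≤ M) →
          ∫ x in Ω, ‖gu x‖ ^ (p - 2) * (inner ℝ (gu x) (gφ x) : ℝ) =
            lam * (∫ x in Ω, (‖gu x‖ ^ p / u x) * φ x) +
              ∫ x in Ω, φ x * (u x) ^ (-γ)) := by
  rintro ⟨u, gu, hu, ⟨M, hM⟩, hpos, hloc, hint, hweak⟩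
  have hueq := hweak u gu hu ⟨M, hM⟩
  have hBu := not_integrableOn_mul_rpow_neg_of_self_test (hΩo.measure_ne_zero volume hΩne)
    (by positivity) hlam hpos hueq
  obtain ⟨χ, hχ, hχs, hχΩ, hχ1, hBχ, hBχ_pos⟩ := exists_contDiff_integral_mul_pos hΩo hΩne
    (hpos.mono fun x hx => Real.rpow_pos_of_pos hx (-γ)) hloc
  have hχW := memW1p0_of_contDiff p hχ hχs hχΩ
  have hχeq := hweak χ (gradient χ) hχW ⟨1, Eventually.of_forall hχ1⟩
  have hsumeq := hweak (u + χ) (gu + gradient χ) (hu.add hp.le hχW)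
    ⟨M + 1, hM.mono fun x hx => (abs_add_le _ _).trans (add_le_add hx (hχ1 x))⟩
  simp only [Pi.add_apply, inner_add_right, mul_add, add_mul] at hsumeq
  rw [integral_add (hu.memgu.integrable_norm_rpow_sub_two_mul_inner hp.le hu.memgu).integrableOn
      (hu.memgu.integrable_norm_rpow_sub_two_mul_inner hp.le hχW.memgu).integrableOn,
    integral_add (hint.mul_bdd hu.memu.aestronglyMeasurable.restrict (ae_restrict_of_ae hM))
      (hint.mul_bdd hχ.continuous.aestronglyMeasurable (Eventually.of_forall hχ1)),
    integral_undef fun h => hBu ((integrable_add_iff_integrable_left' hBχ).1 h)] at hsumeq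
  rw [integral_undef hBu] at hueq
  linarith

/-- Section 7.1, `p > 1`. For `λ ≥ 1` and `γ ≥ 0` there is no
(nonnegative, a.e. positive) weak solution `u ∈ W^{1,p}_0(Ω) ∩ L^∞(Ω)` with
`u^{-γ} ∈ L¹_loc(Ω)` of `-Δ_p u = λ|∇u|^p/u + u^{-γ}` in `Ω`, `u = 0` on `∂Ω`,
tested with all `φ ∈ W^{1,p}_0(Ω) ∩ L^∞(Ω)`. -/
theorem nonexistence_p_laplacian (N : ℕ) (hN : 1 ≤ N) (Ω : Set (Euc N))
    (hΩo : IsOpen Ω) (hΩne : Ω.Nonempty) (hΩb : Bornology.IsBounded Ω)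
    (hΩl : HasLipschitzBoundary Ω)
    (p lam γ : ℝ) (hp : 1 < p) (hlam : 1 ≤ lam) (hγ : 0 ≤ γ) :
    ¬ ∃ (u : Euc N → ℝ) (gu : Euc N → Euc N),
        MemW1p0 Ω p u gu ∧
        (∃ M : ℝ, ∀ᵐ x ∂(volume : Measure (Euc N)), |u x| ≤ M) ∧
        (∀ᵐ x ∂(volume.restrict Ω), 0 < u x) ∧
        (∀ K : Set (Euc N), IsCompact K → K ⊆ Ω →
          IntegrableOn (fun x => (u x) ^ (-γ)) K) ∧
        IntegrableOn (fun x => ‖gu x‖ ^ p / u x) Ω ∧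
        (∀ (φ : Euc N → ℝ) (gφ : Euc N → Euc N), MemW1p0 Ω p φ gφ →
          (∃ M : ℝ, ∀ᵐ x ∂(volume : Measure (Euc N)), |φ x| ≤ M) →
          ∫ x in Ω, ‖gu x‖ ^ (p - 2) * (inner ℝ (gu x) (gφ x) : ℝ) =
            lam * (∫ x in Ω, (‖gu x‖ ^ p / u x) * φ x) +
              ∫ x in Ω, φ x * (u x) ^ (-γ)) :=
  nonexistence_p_laplacian_general N Ω hΩo hΩne p lam γ hp hlam

end
end

section
/- Let Ω ⊂ ℝ^N be a bounded convex calibrable set of class C^{1,1}, and let λ, θ, γ > 0. Then the constant function u ≡ (|Ω|/Per(Ω))^{1/γ} is a solution of the Dirichlet problem −Δ₁u = λ|Du|/u^θ + u^{−γ} in Ω, u = 0 on ∂Ω, in the following sense: taking z := ξ|_Ω, the restriction to Ω of the calibrating vector field ξ, one has z ∈ DM^∞(Ω), ‖z‖_∞ ≤ 1, −div z = λ u^{−θ}|Du| + u^{−γ} as measures in Ω (both sides equaling the constant Per(Ω)/|Ω| times Lebesgue measure, since Du = 0), (z,Du) = |Du| as measures in Ω, and u(1+[z,ν]) = 0 H^{N−1}-a.e.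 on ∂Ω (since [ξ,ν^Ω] = −1). -/
open MeasureTheory Filter Topology Set Metric
open scoped ENNReal NNReal Topology

noncomputable section

variable {N : ℕ}

/-- The nonnegative measure `g(u^*)|Du| + h(u)f 𝔏^N⌊Ω` appearing as `-div z`. -/
def rhsMeasure (Ω : Set (Euc N)) (g h : ℝ → ℝ≥0∞) (f u : Euc N → ℝ)
    (ν : Measure (Euc N)) : Measure (Euc N) :=
  ν.withDensity (fun y => g (pRep u y)) +
    (volume.restrict Ω).withDensity (fun y => h (u y) * ENNReal.ofReal (f y))

/-- Definition 3.1: a (distributional, Anzellotti-sense) solution to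
`-Δ₁ u = g(u)|Du| + h(u) f` in `Ω`, `u = 0` on `∂Ω`. -/
structure IsSol1Lap (Ω : Set (Euc N)) (g h : ℝ → ℝ≥0∞) (f u : Euc N → ℝ)
    (σ : Euc N → Euc N) (ν : Measure (Euc N)) (z : Euc N → Euc N)
    (zn tu : Euc N → ℝ) : Prop where
  /-- `u ≥ 0`. -/
  nonneg : ∀ᵐ x ∂(volume.restrict Ω), 0 ≤ u x
  /-- `u ∈ L¹(Ω)`. -/
  uint : IntegrableOn u Ω
  /-- `u ∈ BV(Ω)` with `Du = σ ν`, `ν = |Du|`. -/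
  grad : IsGradMeas Ω u σ ν
  /-- `|Du|` has finite total variation. -/
  varfin : ν Set.univ < ⊤
  /-- `g(u^*) ∈ L¹_loc(Ω, |Du|)`. -/
  gL1loc : ∀ K : Set (Euc N), IsCompact K → K ⊆ Ω → ∫⁻ x in K, g (pRep u x) ∂ν < ⊤
  /-- `h(u) f ∈ L¹_loc(Ω)`. -/
  hfL1loc : ∀ K : Set (Euc N), IsCompact K → K ⊆ Ω →
    IntegrableOn (fun x => (h (u x)).toReal * f x) K
  /-- `‖z‖_{L^∞(Ω)^N} ≤ 1`. -/
  zbd : ∀ᵐ x ∂(volume.restrict Ω), ‖z x‖ ≤ 1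
  /-- `-div z = g(u^*)|Du| + h(u) f` as measures in `Ω`. -/
  diveq : ∀ φ : Euc N → ℝ, IsTestOn Ω φ →
    ∫ x in Ω, (inner ℝ (z x) (gradient φ x) : ℝ) = ∫ x, φ x ∂(rhsMeasure Ω g h f u ν)
  /-- `(z, Du) = |Du|` as measures in `Ω` (Anzellotti pairing, written out using
  `-div z = rhsMeasure`). -/
  pairing : ∀ φ : Euc N → ℝ, IsTestOn Ω φ →
    (∫ x, pRep u x * φ x ∂(rhsMeasure Ω g h f u ν)) -
      ∫ x in Ω, u x * (inner ℝ (z x) (gradient φ x) : ℝ) = ∫ x, φ x ∂ν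
  /-- `zn = [z,ν]` is the weak normal trace of `z` on `∂Ω` (Green formula). -/
  greenTrace : ∀ φ : Euc N → ℝ, ContDiff ℝ 1 φ →
    (- ∫ x, φ x ∂(rhsMeasure Ω g h f u ν)) +
        ∫ x in Ω, (inner ℝ (z x) (gradient φ x) : ℝ) =
      ∫ x in frontier Ω, φ x * zn x ∂(μH[(N:ℝ) - 1])
  /-- `‖[z,ν]‖_{L^∞(∂Ω)} ≤ 1`. -/
  znbd : ∀ᵐ x ∂((μH[(N:ℝ) - 1]).restrict (frontier Ω)), |zn x| ≤ 1
  /-- `tu` is the boundary trace of `u`. -/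
  traceu : IsBdryTrace Ω u tu
  /-- the weak boundary condition `u (1 + [z,ν]) = 0` `H^{N-1}`-a.e. on `∂Ω`. -/
  bdry : ∀ᵐ x ∂((μH[(N:ℝ) - 1]).restrict (frontier Ω)), tu x * (1 + zn x) = 0


/-- `Ω` has boundary of class `C^{1,1}`: near each boundary point, `Ω` coincides with
the open subgraph of a `C¹` function with Lipschitz derivative, in suitable
orthonormal coordinates. -/
def HasC11Boundary (Ω : Set (Euc N)) : Prop :=
  ∀ x ∈ frontier Ω, ∃ v : Euc N, ‖v‖ = 1 ∧
    ∃ gph : (Submodule.span ℝ {v})ᗮ → ℝ, ContDiff ℝ 1 gph ∧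
      (∃ K : ℝ≥0, LipschitzWith K (fderiv ℝ gph)) ∧
      ∃ r : ℝ, 0 < r ∧ ∀ y ∈ Metric.ball x r,
        (y ∈ Ω ↔ (inner ℝ y v : ℝ) < gph (Submodule.orthogonalProjectionOnto (Submodule.span ℝ {v})ᗮ y))

/-!
Since `u` is constant, `Du = 0`: the gradient term `λ|Du|/u^θ` disappears and the pairing
condition `(z, Du) = |Du|` reduces to `0 = 0`. What is left is `-div z = u^{-γ}` in `Ω` together
with the boundary condition, and `u^{-γ} = Per(Ω)/|Ω| = λ_Ω` is exactly the choice of the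
constant for which the calibration `ξ` provides both, through its Green formula on `Ω`
with normal trace `-1`.
-/

section

variable {E : Type*} [NormedAddCommGroup E] [NormedSpace ℝ E] [FiniteDimensional ℝ E]
  [MeasurableSpace E] [BorelSpace E] (μ : Measure E) [μ.IsAddHaarMeasure]

theorem integral_fderiv_apply_eq_zero {φ : E → ℝ} (hφ : ContDiff ℝ 1 φ)
    (hcs : HasCompactSupport φ) (v : E) : ∫ x, fderiv ℝ φ x v ∂μ = 0 := by
  have hcont : Continuous fun x => fderiv ℝ φ x v :=
    (hφ.continuous_fderiv one_ne_zero).clm_apply continuous_const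
  have hcs' : HasCompactSupport fun x => fderiv ℝ φ x v :=
    (hcs.fderiv ℝ).comp_left (g := fun L : E →L[ℝ] ℝ => L v) rfl
  have := integral_mul_fderiv_eq_neg_fderiv_mul_of_integrable (μ := μ) (v := v)
    (f := fun _ => (1 : ℝ)) (g := φ) (by simp)
    (by simpa using hcont.integrable_of_hasCompactSupport hcs')
    (by simpa using hφ.continuous.integrable_of_hasCompactSupport hcs)
    (fun x _ => differentiableAt_const _) (fun x _ => hφ.differentiable one_ne_zero x)
  simpa using this

end

theorem pRep_const (c : ℝ) (x : Euc N) : pRep (fun _ => c) x = c := by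
  refine Tendsto.limUnder_eq (tendsto_const_nhds.congr' ?_)
  filter_upwards [self_mem_nhdsWithin] with r (hr : 0 < r)
  exact (setAverage_const (measure_ball_pos volume x hr).ne' measure_ball_lt_top.ne c).symm

namespace IsTestOn

variable {Ω : Set (Euc N)} {φ : Euc N → ℝ}

theorem fderiv_eq_zero_of_notMem (hφ : IsTestOn Ω φ) {x : Euc N} (hx : x ∉ Ω) :
    fderiv ℝ φ x = 0 :=
  fderiv_of_notMem_tsupport ℝ fun h => hx (hφ.2.2 h)

theorem setIntegral_pd_eq_zero (hφ : IsTestOn Ω φ) (i : Fin N) : ∫ x in Ω, pd φ i x = 0 := by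
  rw [setIntegral_eq_integral_of_forall_compl_eq_zero fun x hx => by
    simp [pd, hφ.fderiv_eq_zero_of_notMem hx]]
  exact integral_fderiv_apply_eq_zero volume hφ.1 hφ.2.1 _

/-- Test functions supported in the open set `Ω` vanish on `frontier Ω`, so the boundary term of
the Green formula drops out. -/
theorem setIntegral_inner_gradient_of_green {z : Euc N → Euc N} {zn : Euc N → ℝ} {κ : ℝ}
    {m : Measure (Euc N)} (hΩ : IsOpen Ω)
    (hgreen : ∀ ψ : Euc N → ℝ, ContDiff ℝ 1 ψ →
      -(κ * ∫ x in Ω, ψ x) + ∫ x in Ω, (inner ℝ (z x) (gradient ψ x) : ℝ) =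
        ∫ x in frontier Ω, ψ x * zn x ∂m)
    (hφ : IsTestOn Ω φ) :
    ∫ x in Ω, (inner ℝ (z x) (gradient φ x) : ℝ) = κ * ∫ x in Ω, φ x := by
  have hvanish : ∫ x in frontier Ω, φ x * zn x ∂m = 0 :=
    setIntegral_eq_zero_of_forall_eq_zero fun x hx => by
      have hxΩ : x ∉ Ω := fun h => hΩ.inter_frontier_eq.subset ⟨h, hx⟩
      simp [image_eq_zero_of_notMem_tsupport fun h => hxΩ (hφ.2.2 h)]
  linarith [hgreen φ hφ.1]

end IsTestOn

theorem isGradMeas_const (Ω : Set (Euc N)) (c : ℝ) (σ : Euc N → Euc N) :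
    IsGradMeas Ω (fun _ => c) σ 0 where
  unit := by simp
  outside := rfl
  ibp φ hφ i := by simp [integral_const_mul, hφ.setIntegral_pd_eq_zero i]

theorem isBdryTrace_const (Ω : Set (Euc N)) (c : ℝ) : IsBdryTrace Ω (fun _ => c) (fun _ => c) :=
  ae_of_all _ fun _ => by simp

theorem rhsMeasure_const_zero (Ω : Set (Euc N)) (g h : ℝ → ℝ≥0∞) (c : ℝ) :
    rhsMeasure Ω g h (fun _ => 1) (fun _ => c) 0 = h c • volume.restrict Ω := by
  simp [rhsMeasure, withDensity_const]

theorem isSol1Lap_const_of_green {Ω : Set (Euc N)} (hΩo : IsOpen Ω) (hΩfin : volume Ω ≠ ⊤)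
    (g h : ℝ → ℝ≥0∞) {c κ : ℝ} (hc : 0 ≤ c) (hκ : 0 ≤ κ) (hhc : h c = ENNReal.ofReal κ)
    (σ : Euc N → Euc N) {z : Euc N → Euc N} {zn : Euc N → ℝ}
    (hz : ∀ᵐ x ∂(volume.restrict Ω), ‖z x‖ ≤ 1)
    (hgreen : ∀ φ : Euc N → ℝ, ContDiff ℝ 1 φ →
      -(κ * ∫ x in Ω, φ x) + ∫ x in Ω, (inner ℝ (z x) (gradient φ x) : ℝ) =
        ∫ x in frontier Ω, φ x * zn x ∂(μH[(N:ℝ) - 1]))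
    (hzn : ∀ᵐ x ∂((μH[(N:ℝ) - 1]).restrict (frontier Ω)), |zn x| ≤ 1)
    (hbdry : ∀ᵐ x ∂((μH[(N:ℝ) - 1]).restrict (frontier Ω)), c * (1 + zn x) = 0) :
    IsSol1Lap Ω g h (fun _ => 1) (fun _ => c) σ 0 z zn (fun _ => c) := by
  have hrhs (φ : Euc N → ℝ) :
      ∫ x, φ x ∂(rhsMeasure Ω g h (fun _ => 1) (fun _ => c) 0) = κ * ∫ x in Ω, φ x := by
    rw [rhsMeasure_const_zero, integral_smul_measure, hhc, ENNReal.toReal_ofReal hκ, smul_eq_mul]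
  have hdiv {φ : Euc N → ℝ} (hφ : IsTestOn Ω φ) :=
    hφ.setIntegral_inner_gradient_of_green hΩo hgreen
  refine
    { nonneg := ae_of_all _ fun _ => hc
      uint := integrableOn_const hΩfin
      grad := isGradMeas_const Ω c σ
      varfin := by simp
      gL1loc := fun _ _ _ => by simp
      hfL1loc := fun K hK _ => integrableOn_const hK.measure_lt_top.ne
      zbd := hz
      diveq := fun φ hφ => by rw [hrhs, hdiv hφ]
      pairing := fun φ hφ => by
        simp only [pRep_const, hrhs, integral_const_mul, hdiv hφ, integral_zero_measure]
        ring
      greenTrace := fun φ hφ => by rw [hrhs, hgreen φ hφ]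
      znbd := hzn
      traceu := isBdryTrace_const Ω c
      bdry := hbdry }

theorem calibrable_constant_solution_general (N : ℕ) (Ω : Set (Euc N))
    (hΩo : IsOpen Ω) (hΩne : Ω.Nonempty) (hΩb : Bornology.IsBounded Ω)
    (lam θ γ : ℝ) (hγ : 0 < γ)
    (νE : Measure (Euc N))
    (hPer : 0 < (νE Set.univ).toReal)
    -- the calibration `ξ` and the constant `λ_Ω`
    (ξ : Euc N → Euc N) (hξbd : ∀ᵐ x ∂(volume : Measure (Euc N)), ‖ξ x‖ ≤ 1)
    (lamE : ℝ) (hlamE : lamE = (νE Set.univ).toReal / (volume Ω).toReal)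
    -- `[ξ, ν^Ω] = -1` `H^{N-1}`-a.e. on `∂Ω` (Green formula on `Ω`)
    (hnt : ∀ φ : Euc N → ℝ, ContDiff ℝ 1 φ →
      (- (lamE * ∫ x in Ω, φ x)) + ∫ x in Ω, (inner ℝ (ξ x) (gradient φ x) : ℝ) =
        ∫ x in frontier Ω, φ x * (-1 : ℝ) ∂(μH[(N:ℝ) - 1])) :
    -- conclusion: the constant `(|Ω|/Per(Ω))^{1/γ}` solves the singular problem, with
    -- `z = ξ|_Ω`, `|Du| = 0`, `[z,ν] = -1` and boundary trace equal to the constant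
    IsSol1Lap Ω
      (fun s => if s ≤ 0 then ⊤ else ENNReal.ofReal (lam / s ^ θ))
      (fun s => if s ≤ 0 then ⊤ else ENNReal.ofReal (s ^ (-γ)))
      (fun _ => 1)
      (fun _ => ((volume Ω).toReal / (νE Set.univ).toReal) ^ γ⁻¹)
      (fun _ => 0) (0 : Measure (Euc N)) ξ
      (fun _ => (-1 : ℝ))
      (fun _ => ((volume Ω).toReal / (νE Set.univ).toReal) ^ γ⁻¹) := by
  have hvol : 0 < (volume Ω).toReal :=
    ENNReal.toReal_pos (hΩo.measure_pos volume hΩne).ne' hΩb.measure_lt_top.ne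
  have hratio : 0 < (volume Ω).toReal / (νE Set.univ).toReal := div_pos hvol hPer
  set c := ((volume Ω).toReal / (νE Set.univ).toReal) ^ γ⁻¹
  have hc : 0 < c := Real.rpow_pos_of_pos hratio _
  have hcγ : c ^ (-γ) = lamE := by
    rw [Real.rpow_neg hc.le, Real.rpow_inv_rpow hratio.le hγ.ne', inv_div, hlamE]
  refine isSol1Lap_const_of_green hΩo hΩb.measure_lt_top.ne _ _ hc.le (hcγ ▸ by positivity)
    (by rw [if_neg hc.not_ge, hcγ]) _ (ae_restrict_of_ae hξbd) hnt
    (ae_of_all _ fun _ => by norm_num) (ae_of_all _ fun _ => by ring)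

/-- Example 7.2. Let `Ω` be a bounded convex calibrable set of class
`C^{1,1}` with calibration `ξ` (so `‖ξ‖_∞ ≤ 1`, `(ξ,Dχ_Ω) = |Dχ_Ω|`,
`-div ξ = λ_Ω χ_Ω` in `D'(ℝ^N)` with `λ_Ω = Per(Ω)/|Ω|` and `[ξ,ν^Ω] = -1`
`H^{N-1}`-a.e. on `∂Ω`). Then for all `λ, θ, γ > 0` the constant function
`u ≡ (|Ω|/Per(Ω))^{1/γ}` is a solution of
`-Δ₁ u = λ|Du|/u^θ + u^{-γ}` in `Ω`, `u = 0` on `∂Ω` (in the sense of Definition 3.1,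
with vector field `z := ξ|_Ω`, `Du = 0`, `[z,ν] = -1` and boundary trace `u`). -/
theorem calibrable_constant_solution (N : ℕ) (hN : 1 ≤ N) (Ω : Set (Euc N))
    (hΩo : IsOpen Ω) (hΩne : Ω.Nonempty) (hΩb : Bornology.IsBounded Ω)
    (hΩc : Convex ℝ Ω) (hΩreg : HasC11Boundary Ω)
    (lam θ γ : ℝ) (hlam : 0 < lam) (hθ : 0 < θ) (hγ : 0 < γ)
    -- perimeter structure: `χ_Ω ∈ BV(ℝ^N)` with `|Dχ_Ω| = νE`
    (σE : Euc N → Euc N) (νE : Measure (Euc N))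
    (hgradE : IsGradMeas Set.univ (Ω.indicator (fun _ => (1:ℝ))) σE νE)
    (hνEfin : νE Set.univ < ⊤) (hPer : 0 < (νE Set.univ).toReal)
    -- the calibration `ξ` and the constant `λ_Ω`
    (ξ : Euc N → Euc N) (hξbd : ∀ᵐ x ∂(volume : Measure (Euc N)), ‖ξ x‖ ≤ 1)
    (lamE : ℝ) (hlamE : lamE = (νE Set.univ).toReal / (volume Ω).toReal)
    (hdivξ : ∀ φ : Euc N → ℝ, IsTestOn Set.univ φ →
      ∫ x, (inner ℝ (ξ x) (gradient φ x) : ℝ) = lamE * ∫ x in Ω, φ x)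
    (hpairξ : ∀ φ : Euc N → ℝ, IsTestOn Set.univ φ →
      lamE * (∫ x in Ω, pRep (Ω.indicator (fun _ => (1:ℝ))) x * φ x) -
          (∫ x, Ω.indicator (fun _ => (1:ℝ)) x * (inner ℝ (ξ x) (gradient φ x) : ℝ)) =
        ∫ x, φ x ∂νE)
    -- `[ξ, ν^Ω] = -1` `H^{N-1}`-a.e. on `∂Ω` (Green formula on `Ω`)
    (hnt : ∀ φ : Euc N → ℝ, ContDiff ℝ 1 φ →
      (- (lamE * ∫ x in Ω, φ x)) + ∫ x in Ω, (inner ℝ (ξ x) (gradient φ x) : ℝ) =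
        ∫ x in frontier Ω, φ x * (-1 : ℝ) ∂(μH[(N:ℝ) - 1])) :
    -- conclusion: the constant `(|Ω|/Per(Ω))^{1/γ}` solves the singular problem, with
    -- `z = ξ|_Ω`, `|Du| = 0`, `[z,ν] = -1` and boundary trace equal to the constant
    IsSol1Lap Ω
      (fun s => if s ≤ 0 then ⊤ else ENNReal.ofReal (lam / s ^ θ))
      (fun s => if s ≤ 0 then ⊤ else ENNReal.ofReal (s ^ (-γ)))
      (fun _ => 1)
      (fun _ => ((volume Ω).toReal / (νE Set.univ).toReal) ^ γ⁻¹)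
      (fun _ => 0) (0 : Measure (Euc N)) ξ
      (fun _ => (-1 : ℝ))
      (fun _ => ((volume Ω).toReal / (νE Set.univ).toReal) ^ γ⁻¹) :=
  calibrable_constant_solution_general N Ω hΩo hΩne hΩb lam θ γ hγ νE hPer ξ hξbd lamE hlamE hnt

end
end
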